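/- arXiv:2508.00181 — 3 statements merged into one kernel-verified Lean document; each statement's English description precedes it below -/
import Mathlib

section
/- In a circuit-free digraph Γ on a finite node set N, the number of maximal spanning forests of Γ equals the product over all non-source nodes i (nodes with at least one incoming arc) of the in-degree of i. -/
/-!
For a circuit-free `F`, being a forest is the same as every node having in-degree at most one in
`F`: walking backwards from any node reaches a source, which reaches its whole weak component, and
paths are unique because, read backwards, a path just follows the unique parent of each node.
Hence a spanning forest of a circuit-free `A` is maximal iff it keeps exactly one incoming arc at
every non-source of `A` (otherwise an arc of `A` into a node left without incoming arc could be
added), and these choices of one incoming arc per non-source are independent of each other.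
-/

open scoped Classical
open Finset

section Preamble

variable {V : Type*} [Fintype V] [DecidableEq V]

/-- Adjacency relation of a digraph given by its arc set. -/
def Adj (A : Finset (V × V)) (i j : V) : Prop := (i, j) ∈ A

/-- A digraph is circuit-free if it contains no directed cycle. -/
def CircuitFree (A : Finset (V × V)) : Prop :=
  ∀ i : V, ¬ Relation.TransGen (Adj A) i i

/-- In-degree of a node. -/
def inDeg (A : Finset (V × V)) (j : V) : ℕ :=
  (A.filter (fun a => a.2 = j)).card

/-- Weak connectivity (chains, ignoring orientation). -/
def WConn (A : Finset (V × V)) (i j : V) : Prop :=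
  Relation.ReflTransGen (fun a b => (a, b) ∈ A ∨ (b, a) ∈ A) i j

/-- The weakly connected component of `i`, as a finset. -/
noncomputable def compF (A : Finset (V × V)) (i : V) : Finset V :=
  Finset.univ.filter (fun j => WConn A i j)

/-- `IsPath A p` : `p` is a (nonempty) directed path along arcs of `A`. -/
def IsPath (A : Finset (V × V)) : List V → Prop
  | [] => False
  | [_] => True
  | i :: j :: l => (i, j) ∈ A ∧ IsPath A (j :: l)

/-- The digraph `A` restricted to the node set `K` is an arborescence:
there is a root `r ∈ K` with a unique directed path from `r` to every node of `K`. -/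
def IsArbOn (A : Finset (V × V)) (K : Set V) : Prop :=
  ∃ r ∈ K, ∀ i ∈ K, ∃! p : List V,
    IsPath A p ∧ p.head? = some r ∧ p.getLast? = some i

/-- A forest: every weakly connected component is an arborescence. -/
def IsForest (A : Finset (V × V)) : Prop :=
  ∀ i : V, IsArbOn A {j | WConn A i j}

/-- `F` is a maximal spanning forest of the digraph `A`. -/
def IsMaxSpanningForest (A F : Finset (V × V)) : Prop :=
  F ⊆ A ∧ IsForest F ∧ ∀ a ∈ A, a ∉ F → ¬ IsForest (insert a F)

/-- The collection of all maximal spanning forests of `A`. -/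
noncomputable def maxForests (A : Finset (V × V)) : Finset (Finset (V × V)) :=
  A.powerset.filter (fun F => IsMaxSpanningForest A F)

/-- `S̄_F(i)` : the node `i` together with all its successors in `F`. -/
noncomputable def succSet (F : Finset (V × V)) (i : V) : Finset V :=
  Finset.univ.filter (fun j => Relation.ReflTransGen (Adj F) i j)

/-- `Ŝ_F(i)` : the immediate successors of `i` in `F`. -/
noncomputable def immSucc (F : Finset (V × V)) (i : V) : Finset V :=
  Finset.univ.filter (fun j => (i, j) ∈ F)

/-- Marginal contribution of player `i` with respect to the forest `F`. -/
noncomputable def marg (v : Finset V → ℝ) (F : Finset (V × V)) (i : V) : ℝ :=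
  v (succSet F i) - ∑ j ∈ immSucc F i, v (succSet F j)

/-- The Average Forest leadership measure. -/
noncomputable def AF (v : Finset V → ℝ) (A : Finset (V × V)) (i : V) : ℝ :=
  (∑ F ∈ maxForests A, marg v F i) / (maxForests A).card

/-- The node sets of the arborescence components of a forest `F`. -/
noncomputable def comps (F : Finset (V × V)) : Finset (Finset V) :=
  Finset.univ.image (fun i => compF F i)

/-- Productivity of the organisational situation. -/
noncomputable def Productivity (v : Finset V → ℝ) (A : Finset (V × V)) : ℝ :=
  (∑ F ∈ maxForests A, ∑ K ∈ comps F, v K) / (maxForests A).card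

/-- Superadditivity of a TU game. -/
def Superadditive (v : Finset V → ℝ) : Prop :=
  ∀ S Q : Finset V, Disjoint S Q → v S + v Q ≤ v (S ∪ Q)

/-- Weak connectedness of the digraph. -/
def WeaklyConnected (A : Finset (V × V)) : Prop :=
  ∀ i j : V, WConn A i j

/-- Quasi-strong connectedness: existence of a root reaching every node. -/
def HasRoot (A : Finset (V × V)) : Prop :=
  ∃ r : V, ∀ i : V, Relation.ReflTransGen (Adj A) r i

end Preamble

open Function Relation

theorem List.IsChain.transGen_of_getLast? {α : Type*} {R : α → α → Prop} {a b c : α}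
    {l : List α} (h : (a :: b :: l).IsChain R) (hl : (b :: l).getLast? = some c) :
    TransGen R a c := by
  rw [List.isChain_cons_cons] at h
  rw [List.getLast?_eq_some_getLast (List.cons_ne_nil b l), Option.some_inj] at hl
  exact TransGen.head' h.1 (hl ▸ List.relationReflTransGen_of_exists_isChain_cons l h.2 rfl)

theorem List.IsChain.eq_of_rightUnique {α : Type*} {R : α → α → Prop}
    (hR : Relator.RightUnique R) (hacyc : ∀ a, ¬ TransGen R a a) :
    ∀ {l₁ l₂ : List α}, l₁.IsChain R → l₂.IsChain R → l₁.head? = l₂.head? →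
      l₁.getLast? = l₂.getLast? → l₁ = l₂
  | [], [], _, _, _, _ => rfl
  | [], _ :: _, _, _, hhead, _ | _ :: _, [], _, _, hhead, _ => by simp at hhead
  | [_], [_], _, _, hhead, _ => by simpa using hhead
  | [a], b :: c :: l, _, h, hhead, hlast | b :: c :: l, [a], h, _, hhead, hlast =>
      absurd (h.transGen_of_getLast? (c := b) (by simp_all)) (hacyc b)
  | a :: b :: l₁, c :: d :: l₂, h₁, h₂, hhead, hlast => by
      obtain rfl : a = c := by simpa using hhead
      rw [List.isChain_cons_cons] at h₁ h₂
      obtain rfl := hR h₁.1 h₂.1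
      rw [List.IsChain.eq_of_rightUnique hR hacyc h₁.2 h₂.2 rfl (by simpa using hlast)]

theorem Finset.card_filter_powerset_card_fiber_eq_one {α β : Type*} [DecidableEq β]
    (A : Finset α) (f : α → β) :
    #{F ∈ A.powerset | ∀ b ∈ A.image f, #{a ∈ F | f a = b} = 1} =
      ∏ b ∈ A.image f, #{a ∈ A | f a = b} := by
  classical
  set s := A.image f
  let φ (g : ∀ b ∈ s, α) : Finset α := s.attach.image fun b => g b.1 b.2
  have mem_φ {g : ∀ b ∈ s, α} {a : α} : a ∈ φ g ↔ ∃ b hb, g b hb = a := by simp [φ]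
  have fiber_φ {g} (hg : g ∈ s.pi fun b => {a ∈ A | f a = b}) (b : β) (hb : b ∈ s) :
      {a ∈ φ g | f a = b} = {g b hb} := by
    simp only [mem_pi, mem_filter] at hg
    ext a
    simp only [mem_filter, mem_φ, mem_singleton]
    constructor
    · rintro ⟨⟨b', hb', rfl⟩, hfb⟩
      obtain rfl : b' = b := (hg b' hb').2.symm.trans hfb
      rfl
    · rintro rfl
      exact ⟨⟨b, hb, rfl⟩, (hg b hb).2⟩
  rw [← card_pi]
  symm
  refine card_bij (fun g _ => φ g) (fun g hg => ?_) (fun g hg g' hg' h => ?_) (fun F hF => ?_)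
  · simp only [mem_filter, mem_powerset]
    refine ⟨fun a ha => ?_, fun b hb => by rw [fiber_φ hg b hb, card_singleton]⟩
    obtain ⟨b, hb, rfl⟩ := mem_φ.1 ha
    exact (mem_filter.1 (mem_pi.1 hg b hb)).1
  · funext b hb
    have := fiber_φ hg b hb
    rw [show φ g = φ g' from h, fiber_φ hg' b hb, singleton_inj] at this
    exact this.symm
  · simp only [mem_filter, mem_powerset, card_eq_one] at hF
    obtain ⟨hFA, hF⟩ := hF
    choose g hg using hF
    have hgF (b : β) (hb : b ∈ s) : g b hb ∈ F ∧ f (g b hb) = b :=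
      mem_filter.1 (hg b hb ▸ mem_singleton_self _)
    refine ⟨g, mem_pi.2 fun b hb => mem_filter.2 ⟨hFA (hgF b hb).1, (hgF b hb).2⟩, ?_⟩
    ext a
    refine mem_φ.trans ⟨fun ⟨b, hb, hba⟩ => hba ▸ (hgF b hb).1, fun ha => ?_⟩
    have hfa : f a ∈ s := mem_image_of_mem f (hFA ha)
    have : a ∈ ({g (f a) hfa} : Finset α) := hg (f a) hfa ▸ mem_filter.2 ⟨ha, rfl⟩
    exact ⟨f a, hfa, (mem_singleton.1 this).symm⟩

section Forests

variable {V : Type*} {A F : Finset (V × V)}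

theorem isPath_iff_isChain {p : List V} : IsPath A p ↔ p ≠ [] ∧ p.IsChain (Adj A) := by
  match p with
  | [] => simp [IsPath]
  | [_] => simp [IsPath]
  | _ :: b :: l => simp [IsPath, isPath_iff_isChain (p := b :: l), List.isChain_cons_cons, Adj]

theorem IsPath.concat {p : List V} {x y : V} (hp : IsPath A p) (hx : p.getLast? = some x)
    (hxy : (x, y) ∈ A) : IsPath A (p ++ [y]) := by
  rw [isPath_iff_isChain] at hp ⊢
  exact ⟨by simp, hp.2.append (List.isChain_singleton y) (by simpa [hx, Adj] using hxy)⟩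

theorem exists_isPath_of_reflTransGen {r i : V} (h : ReflTransGen (Adj A) r i) :
    ∃ p, IsPath A p ∧ p.head? = some r ∧ p.getLast? = some i := by
  obtain ⟨l, hl, hlast⟩ := List.exists_isChain_cons_of_relationReflTransGen h
  exact ⟨r :: l, isPath_iff_isChain.2 ⟨by simp, hl⟩, rfl,
    by simp [← hlast, List.getLast?_eq_some_getLast]⟩

theorem CircuitFree.subset (hA : CircuitFree A) (hFA : F ⊆ A) : CircuitFree F :=
  fun i h => hA i (TransGen.mono (fun _ _ hab => hFA hab) i i h)

theorem IsPath.eq_of_leftUnique (hF : CircuitFree F) (hpar : Relator.LeftUnique (Adj F))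
    {p q : List V} (hp : IsPath F p) (hq : IsPath F q) (hhead : p.head? = q.head?)
    (hlast : p.getLast? = q.getLast?) : p = q := by
  have hrev : ∀ {p : List V}, IsPath F p → p.reverse.IsChain (swap (Adj F)) :=
    fun hp => List.isChain_reverse.2 (isPath_iff_isChain.1 hp).2
  refine List.reverse_injective <| List.IsChain.eq_of_rightUnique (R := swap (Adj F))
    (fun _ _ _ hb hc => hpar hb hc)
    (fun a h => hF a (transGen_swap.1 h)) (hrev hp) (hrev hq) ?_ ?_ <;> simpa

theorem IsForest.leftUnique (hF : IsForest F) : Relator.LeftUnique (Adj F) := by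
  intro x z j hx hz
  obtain ⟨r, -, hpath⟩ := hF j
  obtain ⟨p, -, huniq⟩ := hpath j ReflTransGen.refl
  have hparent {y : V} (hy : (y, j) ∈ F) : ∃ py, py ++ [j] = p ∧ py.getLast? = some y := by
    obtain ⟨py, ⟨hpy, hhead, hlast⟩, -⟩ := hpath y (ReflTransGen.single (Or.inr hy))
    refine ⟨py, huniq _ ⟨hpy.concat hlast hy, ?_, by simp⟩, hlast⟩
    simp [hhead]
  obtain ⟨px, hpx, hx'⟩ := hparent hx
  obtain ⟨pz, rfl, hz'⟩ := hparent hz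
  simpa [List.append_cancel_right hpx, hz'] using hx'.symm

theorem CircuitFree.exists_source_reflTransGen [Finite V] (hF : CircuitFree F) (i : V) :
    ∃ r, (∀ x, ¬ Adj F x r) ∧ ReflTransGen (Adj F) r i := by
  have : IsTrans V (TransGen (Adj F)) := ⟨fun _ _ _ => TransGen.trans⟩
  have : Std.Irrefl (TransGen (Adj F)) := ⟨hF⟩
  obtain ⟨r, hri, hmin⟩ := (Finite.wellFounded_of_trans_of_irrefl (TransGen (Adj F))).has_min
    {r | ReflTransGen (Adj F) r i} ⟨i, ReflTransGen.refl⟩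
  exact ⟨r, fun x hxr => hmin x (ReflTransGen.head hxr hri) (TransGen.single hxr), hri⟩

theorem reflTransGen_of_wConn (hpar : Relator.LeftUnique (Adj F)) {r i j : V}
    (hr : ∀ x, ¬ Adj F x r) (hri : ReflTransGen (Adj F) r i) (hij : WConn F i j) :
    ReflTransGen (Adj F) r j := by
  induction hij with
  | refl => exact hri
  | tail _ hbc ih =>
    rcases hbc with hbc | hcb
    · exact ih.tail hbc
    · rcases ih.cases_tail with rfl | ⟨d, hrd, hdb⟩
      · exact absurd hcb (hr _)
      · exact hpar hdb hcb ▸ hrd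

theorem isForest_of_leftUnique [Finite V] (hF : CircuitFree F)
    (hpar : Relator.LeftUnique (Adj F)) : IsForest F := by
  intro i
  obtain ⟨r, hr, hri⟩ := hF.exists_source_reflTransGen i
  have hir : WConn F i r := by
    induction hri with
    | refl => exact ReflTransGen.refl
    | tail _ hbc ih => exact ReflTransGen.head (Or.inr hbc) ih
  refine ⟨r, hir, fun j hj => ?_⟩
  obtain ⟨p, hp⟩ := exists_isPath_of_reflTransGen (reflTransGen_of_wConn hpar hr hri hj)
  exact ⟨p, hp, fun q hq => hq.1.eq_of_leftUnique hF hpar hp.1 (hq.2.1.trans hp.2.1.symm)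
    (hq.2.2.trans hp.2.2.symm)⟩

end Forests

section InDegree

variable {V : Type*} [DecidableEq V] {A F : Finset (V × V)}

theorem leftUnique_adj_iff_inDeg_le_one : Relator.LeftUnique (Adj F) ↔ ∀ j, inDeg F j ≤ 1 := by
  simp only [inDeg, card_le_one, mem_filter]
  constructor
  · rintro hpar j ⟨x, j'⟩ ⟨hx, rfl⟩ ⟨z, j''⟩ ⟨hz, rfl⟩
    rw [hpar hx hz]
  · intro hdeg x z j hx hz
    exact congrArg Prod.fst (hdeg j (x, j) ⟨hx, rfl⟩ (z, j) ⟨hz, rfl⟩)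

theorem inDeg_pos_iff {j : V} : 0 < inDeg A j ↔ j ∈ A.image Prod.snd := by
  simp [inDeg, card_pos, filter_nonempty_iff]

theorem inDeg_mono (hFA : F ⊆ A) (j : V) : inDeg F j ≤ inDeg A j :=
  card_le_card (filter_subset_filter _ hFA)

theorem inDeg_insert {a : V × V} (ha : a ∉ F) (j : V) :
    inDeg (insert a F) j = inDeg F j + if a.2 = j then 1 else 0 := by
  unfold inDeg
  split_ifs with h
  · rw [filter_insert, if_pos h, card_insert_of_notMem (by simp [ha])]
  · rw [filter_insert, if_neg h, add_zero]

theorem isForest_iff_inDeg_le_one [Finite V] (hF : CircuitFree F) :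
    IsForest F ↔ ∀ j, inDeg F j ≤ 1 :=
  (Iff.intro IsForest.leftUnique (isForest_of_leftUnique hF)).trans
    leftUnique_adj_iff_inDeg_le_one

theorem isMaxSpanningForest_iff [Finite V] (hA : CircuitFree A) :
    IsMaxSpanningForest A F ↔ F ⊆ A ∧ ∀ j ∈ A.image Prod.snd, inDeg F j = 1 := by
  constructor
  · rintro ⟨hFA, hF, hmax⟩
    have hdeg := (isForest_iff_inDeg_le_one (hA.subset hFA)).1 hF
    refine ⟨hFA, fun j hj => le_antisymm (hdeg j) ?_⟩
    obtain ⟨a, haA, rfl⟩ := mem_image.1 hj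
    by_contra! h0
    have haF : a ∉ F := fun haF => by
      have := inDeg_pos_iff.2 (mem_image_of_mem _ haF)
      omega
    refine hmax a haA haF ((isForest_iff_inDeg_le_one
      (hA.subset (insert_subset haA hFA))).2 fun k => ?_)
    rw [inDeg_insert haF]
    split_ifs with hk
    · subst hk
      omega
    · simpa using hdeg k
  · rintro ⟨hFA, hdeg⟩
    have hle (j : V) : inDeg F j ≤ 1 := by
      by_cases hj : j ∈ A.image Prod.snd
      · exact (hdeg j hj).le
      · have := inDeg_mono hFA j
        have := mt inDeg_pos_iff.1 hj
        omega
    refine ⟨hFA, (isForest_iff_inDeg_le_one (hA.subset hFA)).2 hle, fun a haA haF hins => ?_⟩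
    have := (isForest_iff_inDeg_le_one (hA.subset (insert_subset haA hFA))).1 hins a.2
    rw [inDeg_insert haF, hdeg a.2 (mem_image_of_mem _ haA), if_pos rfl] at this
    omega

end InDegree

/-- the number of maximal spanning forests of a circuit-free digraph equals
the product of the in-degrees of its non-source nodes. -/
theorem count_maxForests {V : Type*} [Fintype V] [DecidableEq V]
    (A : Finset (V × V)) (hA : CircuitFree A) :
    (maxForests A).card =
      ∏ i ∈ Finset.univ.filter (fun i => 0 < inDeg A i), inDeg A i := by
  have hmax : maxForests A = {F ∈ A.powerset | ∀ j ∈ A.image Prod.snd, inDeg F j = 1} := by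
    ext F
    simp +contextual [maxForests, isMaxSpanningForest_iff hA]
  have hnonsources : Finset.univ.filter (fun i => 0 < inDeg A i) = A.image Prod.snd := by
    ext j
    simp [inDeg_pos_iff]
  rw [hmax, hnonsources]
  unfold inDeg
  convert card_filter_powerset_card_fiber_eq_one A Prod.snd
end

section
/- If the TU game v is superadditive, then for any maximal spanning forest F of Γ and any weakly connected component C of Γ, the sum of marginal contributions Σ_{i∈C} m_i(F) is at most v(C). Consequently the Average Forest measure is component feasible: for every component C of Γ, Σ_{i∈C} AF_i(N,v,Γ) ≤ v(C). -/
open scoped Classical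
open Finset

/-!
In a forest every node has at most one predecessor, and a weakly connected component `C` of `Γ`
is closed under the arcs of any spanning forest `F ⊆ Γ`. Hence, when the marginal contributions
of the players of `C` are added up, the worth `v (S̄_F(k))` of every non-root `k ∈ C` is
subtracted exactly once, by its predecessor, and what remains is the sum of `v (S̄_F(r))` over
the roots `r ∈ C` of `F`. The successor sets of these roots partition `C`: every node has a root
ancestor because `Γ` is circuit-free, and only one because predecessors are unique. So
superadditivity bounds the sum by `v C`, and averaging over the (nonempty) set of maximal
spanning forests gives the bound for `AF`.
-/

namespace Relation

variable {α : Type*} {R : α → α → Prop}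

theorem ReflTransGen.iff_of_forall_rel {P : α → Prop} (hP : ∀ a b, R a b → (P a ↔ P b))
    {a b : α} (h : ReflTransGen R a b) : P a ↔ P b := by
  induction h with
  | refl => rfl
  | tail _ hbc ih => exact ih.trans (hP _ _ hbc)

theorem exists_minimal_reflTransGen (hwf : WellFounded R) (j : α) :
    ∃ r, (∀ p, ¬ R p r) ∧ ReflTransGen R r j := by
  obtain ⟨r, hrj, hmin⟩ := hwf.has_min {x | ReflTransGen R x j} ⟨j, .refl⟩
  exact ⟨r, fun p hp => hmin p (.head hp hrj) hp, hrj⟩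

theorem ReflTransGen.eq_of_minimal (hR : ∀ a b c, R a c → R b c → a = b) {r r' j : α}
    (hr : ∀ p, ¬ R p r) (hr' : ∀ p, ¬ R p r') (h : ReflTransGen R r j)
    (h' : ReflTransGen R r' j) : r = r' := by
  induction h generalizing r' with
  | refl =>
    rcases h'.cases_tail with rfl | ⟨q, -, hq⟩
    · rfl
    · exact absurd hq (hr q)
  | tail _ hbc ih =>
    rcases h'.cases_tail with rfl | ⟨q, hq, hqc⟩
    · exact absurd hbc (hr' _)
    · exact ih hr' (hR _ _ _ hqc hbc ▸ hq)

end Relation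

open Relation

section Forests

variable {V : Type*}

theorem CircuitFree.wellFounded [Finite V] {A : Finset (V × V)} (hA : CircuitFree A) :
    WellFounded (Adj A) :=
  have : Std.Irrefl (TransGen (Adj A)) := ⟨hA⟩
  Subrelation.wf TransGen.single (Finite.wellFounded_of_trans_of_irrefl _)

theorem IsPath.append_singleton {F : Finset (V × V)} {p : List V} {x k : V}
    (hp : IsPath F p) (hl : p.getLast? = some x) (hxk : (x, k) ∈ F) :
    IsPath F (p ++ [k]) := by
  induction p with
  | nil => exact hp.elim
  | cons a t ih =>
    cases t with
    | nil =>
      obtain rfl : a = x := by simpa using hl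
      exact ⟨hxk, trivial⟩
    | cons b t => exact ⟨hp.1, ih hp.2 (by simpa using hl)⟩

/-- Two predecessors of `k` would give two paths from the root of its component to `k`. -/
theorem IsForest.pred_unique {F : Finset (V × V)} (hF : IsForest F) {a b k : V}
    (ha : (a, k) ∈ F) (hb : (b, k) ∈ F) : a = b := by
  obtain ⟨r, -, hpath⟩ := hF k
  obtain ⟨pa, ⟨hpa, hha, hla⟩, -⟩ := hpath a (ReflTransGen.single (Or.inr ha))
  obtain ⟨pb, ⟨hpb, hhb, hlb⟩, -⟩ := hpath b (ReflTransGen.single (Or.inr hb))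
  obtain ⟨pk, -, hpk⟩ := hpath k ReflTransGen.refl
  have hpath_to_k : ∀ p x, IsPath F p → p.head? = some r → p.getLast? = some x →
      (x, k) ∈ F → p ++ [k] = pk := fun p x hp hh hl hxk =>
    hpk _ ⟨hp.append_singleton hl hxk, by cases p <;> simp_all, by simp⟩
  have hab : pa = pb := List.append_cancel_right
    ((hpath_to_k pa a hpa hha hla ha).trans (hpath_to_k pb b hpb hhb hlb hb).symm)
  exact Option.some_injective _ (hla.symm.trans (hab ▸ hlb))

theorem isForest_empty : IsForest (∅ : Finset (V × V)) := by
  intro i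
  have hcomp : ∀ k, WConn (∅ : Finset (V × V)) i k → k = i := fun k hk => by
    rcases hk.cases_tail with rfl | ⟨_, -, h | h⟩ <;> simp_all
  refine ⟨i, .refl, fun k hk => ?_⟩
  obtain rfl := hcomp k hk
  refine ⟨[k], ⟨trivial, rfl, rfl⟩, ?_⟩
  rintro p ⟨hp, hh, -⟩
  match p, hp, hh with
  | [x], _, hh => simpa using hh
  | _ :: _ :: _, hp, _ => exact absurd hp.1 (notMem_empty _)

theorem maxForests_nonempty [DecidableEq V] (A : Finset (V × V)) : (maxForests A).Nonempty := by
  obtain ⟨F, hF, hmax⟩ := Finset.exists_maximal (s := A.powerset.filter IsForest)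
    ⟨∅, by simpa using isForest_empty⟩
  simp only [mem_filter, mem_powerset] at hF hmax
  refine ⟨F, mem_filter.2 ⟨mem_powerset.2 hF.1, hF.1, hF.2, fun a ha haF hins => haF ?_⟩⟩
  exact hmax ⟨insert_subset ha hF.1, hins⟩ (subset_insert a F) (mem_insert_self a F)

end Forests

theorem Superadditive.sum_le_biUnion {V ι : Type*} [DecidableEq V] {v : Finset V → ℝ}
    (hsa : Superadditive v) {s : Finset ι} (hs : s.Nonempty) {S : ι → Finset V} (hS : (s : Set ι).PairwiseDisjoint S) :
    ∑ i ∈ s, v (S i) ≤ v (s.biUnion S) := by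
  induction hs using Finset.Nonempty.cons_induction with
  | singleton a => simp
  | cons a s ha hs ih =>
    rw [sum_cons, cons_eq_insert, biUnion_insert]
    have hdisj : Disjoint (S a) (s.biUnion S) := (disjoint_biUnion_right _ _ _).2 fun i hi =>
      hS (by simp) (by simp [hi]) (ne_of_mem_of_not_mem hi ha).symm
    calc v (S a) + ∑ i ∈ s, v (S i)
        ≤ v (S a) + v (s.biUnion S) := by
          gcongr; exact ih (hS.subset (by simp [Set.subset_insert]))
      _ ≤ v (S a ∪ s.biUnion S) := hsa _ _ hdisj

section MarginalContributions

variable {V : Type*} [Fintype V]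

def IsRoot (F : Finset (V × V)) (r : V) : Prop := ∀ p, (p, r) ∉ F

variable {F : Finset (V × V)} {C : Finset V}

theorem sum_marg_eq_sum_roots [DecidableEq V] (hF : ∀ a b k, (a, k) ∈ F → (b, k) ∈ F → a = b)
    (hC : ∀ a b, (a, b) ∈ F → (a ∈ C ↔ b ∈ C)) (v : Finset V → ℝ) :
    ∑ j ∈ C, marg v F j = ∑ r ∈ C with IsRoot F r, v (succSet F r) := by
  have hdisj : (C : Set V).PairwiseDisjoint (immSucc F) := fun a _ b _ hab =>
    disjoint_left.2 fun k hak hbk => hab (hF a b k (by simpa [immSucc] using hak)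
      (by simpa [immSucc] using hbk))
  have hnonroots : C.biUnion (immSucc F) = {k ∈ C | ¬ IsRoot F k} := by
    ext k
    simp only [mem_biUnion, mem_filter, immSucc, mem_univ, true_and, IsRoot, not_forall,
      not_not]
    constructor
    · rintro ⟨j, hj, hjk⟩; exact ⟨(hC _ _ hjk).1 hj, j, hjk⟩
    · rintro ⟨hk, j, hjk⟩; exact ⟨j, (hC _ _ hjk).2 hk, hjk⟩
  simp only [marg, sum_sub_distrib, ← sum_biUnion hdisj, hnonroots]
  rw [← sum_filter_add_sum_filter_not C (IsRoot F)]
  ring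

theorem biUnion_succSet_roots [DecidableEq V] (hwf : WellFounded (Adj F))
    (hC : ∀ a b, (a, b) ∈ F → (a ∈ C ↔ b ∈ C)) :
    {r ∈ C | IsRoot F r}.biUnion (succSet F) = C := by
  ext k
  simp only [mem_biUnion, mem_filter, succSet, mem_univ, true_and]
  constructor
  · rintro ⟨r, ⟨hr, -⟩, hrk⟩
    exact (hrk.iff_of_forall_rel hC).1 hr
  · intro hk
    obtain ⟨r, hr, hrk⟩ := exists_minimal_reflTransGen hwf k
    exact ⟨r, ⟨(hrk.iff_of_forall_rel hC).2 hk, hr⟩, hrk⟩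

theorem pairwiseDisjoint_succSet_roots (hF : ∀ a b k, (a, k) ∈ F → (b, k) ∈ F → a = b) :
    {r | IsRoot F r}.PairwiseDisjoint (succSet F) := fun _ hr _ hr' hne =>
  disjoint_left.2 fun _ hrk hr'k => hne <| ReflTransGen.eq_of_minimal hF hr hr'
    (mem_filter.1 hrk).2 (mem_filter.1 hr'k).2

theorem sum_marg_le [DecidableEq V] (hF : ∀ a b k, (a, k) ∈ F → (b, k) ∈ F → a = b)
    (hwf : WellFounded (Adj F)) {v : Finset V → ℝ} (hsa : Superadditive v)
    (hC : ∀ a b, (a, b) ∈ F → (a ∈ C ↔ b ∈ C)) (hCne : C.Nonempty) :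
    ∑ j ∈ C, marg v F j ≤ v C := by
  have hcover := biUnion_succSet_roots hwf hC
  have hroots : {r ∈ C | IsRoot F r}.Nonempty := by
    obtain ⟨r, hr, -⟩ := biUnion_nonempty.1 (hcover ▸ hCne)
    exact ⟨r, hr⟩
  calc ∑ j ∈ C, marg v F j
      = ∑ r ∈ C with IsRoot F r, v (succSet F r) := sum_marg_eq_sum_roots hF hC v
    _ ≤ v ({r ∈ C | IsRoot F r}.biUnion (succSet F)) :=
      hsa.sum_le_biUnion hroots <| (pairwiseDisjoint_succSet_roots hF).subset fun r hr =>
        (mem_filter.1 hr).2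
    _ = v C := by rw [hcover]

end MarginalContributions

theorem mem_compF_iff_of_mem {V : Type*} [Fintype V] {A : Finset (V × V)} {a b : V}
    (hab : (a, b) ∈ A) (i : V) : a ∈ compF A i ↔ b ∈ compF A i := by
  simp only [compF, mem_filter, mem_univ, true_and]
  exact ⟨fun h => h.tail (.inl hab), fun h => h.tail (.inr hab)⟩

theorem AF_component_feasible_general {V : Type*} [Fintype V] [DecidableEq V]
    (A : Finset (V × V)) (hA : CircuitFree A)
    (v : Finset V → ℝ) (hsa : Superadditive v) :
    (∀ F ∈ maxForests A, ∀ i : V, ∑ j ∈ compF A i, marg v F j ≤ v (compF A i)) ∧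
    (∀ i : V, ∑ j ∈ compF A i, AF v A j ≤ v (compF A i)) := by
  have hforest : ∀ F ∈ maxForests A, ∀ i : V,
      ∑ j ∈ compF A i, marg v F j ≤ v (compF A i) := by
    intro F hF i
    obtain ⟨hFA, hFor, -⟩ := (mem_filter.1 hF).2
    exact sum_marg_le (fun _ _ _ => hFor.pred_unique)
      (Subrelation.wf (fun h => hFA h) hA.wellFounded) hsa
      (fun a b hab => mem_compF_iff_of_mem (hFA hab) i) ⟨i, mem_filter.2 ⟨mem_univ i, .refl⟩⟩
  refine ⟨hforest, fun i => ?_⟩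
  have hcard : (0 : ℝ) < (maxForests A).card := by
    exact_mod_cast (maxForests_nonempty A).card_pos
  calc ∑ j ∈ compF A i, AF v A j
      = (∑ F ∈ maxForests A, ∑ j ∈ compF A i, marg v F j) / (maxForests A).card := by
        simp only [AF, ← sum_div]; rw [sum_comm]
    _ ≤ v (compF A i) := by
        rw [div_le_iff₀ hcard, mul_comm, ← nsmul_eq_mul]
        exact sum_le_card_nsmul _ _ _ fun F hF => hforest F hF i

/-- component feasibility. If `v` is superadditive, then for every maximal
spanning forest the marginal contributions over a component of `Γ` sum to at most the
worth of the component, and consequently the Average Forest measure is component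
feasible. -/
theorem AF_component_feasible {V : Type*} [Fintype V] [DecidableEq V]
    (A : Finset (V × V)) (hA : CircuitFree A)
    (v : Finset V → ℝ) (hv0 : v ∅ = 0) (hsa : Superadditive v) :
    (∀ F ∈ maxForests A, ∀ i : V, ∑ j ∈ compF A i, marg v F j ≤ v (compF A i)) ∧
    (∀ i : V, ∑ j ∈ compF A i, AF v A j ≤ v (compF A i)) :=
  AF_component_feasible_general A hA v hsa
end

section
/- The Average Forest measure satisfies coalitional monotonicity: if v and w are games with v(S)=w(S) for all S ≠ T and v(T) < w(T), then AF_i(N,v,Γ) ≤ AF_i(N,w,Γ) for every i ∈ T. -/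
open scoped Classical
open Finset

section CoalitionalMonotonicity

variable {V : Type*}

theorem CircuitFree.mono {A F : Finset (V × V)} (hFA : F ⊆ A) (hA : CircuitFree A) :
    CircuitFree F := fun x hx => hA x (Relation.TransGen.mono (fun _ _ hab => hFA hab) _ _ hx)

theorem subset_of_mem_maxForests [DecidableEq V] {A F : Finset (V × V)}
    (hF : F ∈ maxForests A) : F ⊆ A :=
  mem_powerset.mp (mem_filter.mp hF).1

theorem notMem_succSet_of_mem_immSucc [Fintype V] [DecidableEq V] {F : Finset (V × V)}
    (hF : CircuitFree F) {i j : V} (hj : j ∈ immSucc F i) : i ∉ succSet F j := by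
  simp only [immSucc, succSet, mem_filter, mem_univ, true_and] at hj ⊢
  exact fun hji => hF i (Relation.TransGen.head' hj hji)

/-- The sets `S̄_F(j)` subtracted in `marg v F i` do not contain `i`, so a coalition `T ∋ i` can
enter `marg v F i` only as `S̄_F(i)`, with positive sign. -/
theorem marg_le_marg_of_eqOn_ne [Fintype V] [DecidableEq V] {F : Finset (V × V)}
    (hF : CircuitFree F) {v w : Finset V → ℝ} {T : Finset V} (heq : ∀ S, S ≠ T → v S = w S)
    (hle : v T ≤ w T) {i : V} (hi : i ∈ T) : marg v F i ≤ marg w F i := by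
  have hlead : v (succSet F i) ≤ w (succSet F i) := by
    by_cases hS : succSet F i = T
    · rwa [hS]
    · exact (heq _ hS).le
  have hsucc : ∑ j ∈ immSucc F i, v (succSet F j) = ∑ j ∈ immSucc F i, w (succSet F j) :=
    sum_congr rfl fun j hj => heq _ fun hS =>
      notMem_succSet_of_mem_immSucc hF hj (hS ▸ hi)
  rw [marg, marg, hsucc]
  linarith

theorem AF_mono [Fintype V] [DecidableEq V] {A : Finset (V × V)} {v w : Finset V → ℝ} {i : V}
    (h : ∀ F ∈ maxForests A, marg v F i ≤ marg w F i) : AF v A i ≤ AF w A i :=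
  div_le_div_of_nonneg_right (sum_le_sum h) (Nat.cast_nonneg _)

end CoalitionalMonotonicity

/-- coalitional monotonicity of the Average Forest measure. -/
theorem AF_coalitional_monotone {V : Type*} [Fintype V] [DecidableEq V]
    (A : Finset (V × V)) (hA : CircuitFree A)
    (v w : Finset V → ℝ) (T : Finset V)
    (heq : ∀ S : Finset V, S ≠ T → v S = w S) (hlt : v T < w T) :
    ∀ i ∈ T, AF v A i ≤ AF w A i := fun _ hi =>
  AF_mono fun _ hF =>
    marg_le_marg_of_eqOn_ne (hA.mono (subset_of_mem_maxForests hF)) heq hlt.le hi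
end
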